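/- arXiv:2602.21304 — 3 statements merged into one kernel-verified Lean document; each statement's English description precedes it below -/
import Mathlib

section
/- For every natural number k ≥ 2 and all complex numbers z, u₁, u₂, u₃, define c(w,a,b) := b * Complex.exp (((k:ℂ)-1) * a * w^(k-1)) + a and z₂ := Complex.exp (u₁ * z^(k-1)) * z. Then c(z, c(z,u₁,u₂), u₃) = c(z, u₁, c(z₂, u₂, u₃)). -/
/- Associativity reduces to the identity `z₂^(k-1) = exp((k-1) u₁ z^(k-1)) z^(k-1)` for the
target `z₂ = exp(u₁ z^(k-1)) z` of the first arrow: after it, both sides are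
`u₃ exp((k-1)(u₁ + u₂ e) z^(k-1)) + u₂ e + u₁` with `e = exp((k-1) u₁ z^(k-1))`. -/

/-- The composition parameter law `c` of the explicit local model groupoid `Stok_k`. -/
noncomputable def stokParam (k : ℕ) (w a b : ℂ) : ℂ :=
  b * Complex.exp (((k : ℂ) - 1) * a * w ^ (k - 1)) + a

theorem stokParam_assoc_of_pow_eq {k : ℕ} {z z₂ : ℂ} (u₁ u₂ u₃ : ℂ)
    (hz₂ : z₂ ^ (k - 1) = Complex.exp (((k : ℂ) - 1) * u₁ * z ^ (k - 1)) * z ^ (k - 1)) :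
    stokParam k z (stokParam k z u₁ u₂) u₃ = stokParam k z u₁ (stokParam k z₂ u₂ u₃) := by
  simp only [stokParam, hz₂]
  set e := Complex.exp (((k : ℂ) - 1) * u₁ * z ^ (k - 1))
  rw [show ((k : ℂ) - 1) * (u₂ * e + u₁) * z ^ (k - 1)
      = ((k : ℂ) - 1) * u₂ * (e * z ^ (k - 1)) + ((k : ℂ) - 1) * u₁ * z ^ (k - 1) by ring,
    Complex.exp_add]
  ring

theorem exp_mul_mul_pow_pred {k : ℕ} (hk : 1 ≤ k) (u z : ℂ) :
    (Complex.exp (u * z ^ (k - 1)) * z) ^ (k - 1)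
      = Complex.exp (((k : ℂ) - 1) * u * z ^ (k - 1)) * z ^ (k - 1) := by
  rw [mul_pow, ← Complex.exp_nat_mul, Nat.cast_sub hk, Nat.cast_one, mul_assoc]

/-- Associativity of the composition law of the explicit local model groupoid `Stok_k`
(Gualtieri–Li–Pym): for `k ≥ 2`, all `z, u₁, u₂, u₃ : ℂ`, and
`z₂ := exp (u₁ * z^(k-1)) * z`, one has
`c(z, c(z,u₁,u₂), u₃) = c(z, u₁, c(z₂,u₂,u₃))`. -/
theorem stok_comp_assoc (k : ℕ) (hk : 2 ≤ k) (z u₁ u₂ u₃ : ℂ) :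
    stokParam k z (stokParam k z u₁ u₂) u₃
      = stokParam k z u₁ (stokParam k (Complex.exp (u₁ * z ^ (k - 1)) * z) u₂ u₃) :=
  stokParam_assoc_of_pow_eq u₁ u₂ u₃ (exp_mul_mul_pow_pred (by omega) u₁ z)
end

section
/- Let E be a real normed vector space and K a simplicial complex in E (in the sense of Mathlib's Geometry.SimplicialComplex over ℝ). For a vertex v of K (i.e., {v} ∈ K.faces), define the open star st(v) to be the union, over all faces s ∈ K.faces with v ∈ s, of the intrinsic interiors intrinsicInterior ℝ (convexHull ℝ ↑s). Then st(v) is star-convex with respect to v: StarConvex ℝ v (st v). -/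
open Geometry Set

lemma combo_mem_intrinsicInterior {E : Type*} [NormedAddCommGroup E] [NormedSpace ℝ E]
    {C : Set E} (hC : Convex ℝ C) {v x : E} (hv : v ∈ C)
    (hx : x ∈ intrinsicInterior ℝ C) {a b : ℝ} (ha : 0 ≤ a) (hb : 0 < b)
    (hab : a + b = 1) : a • v + b • x ∈ intrinsicInterior ℝ C := by
  rw [mem_intrinsicInterior] at hx ⊢
  obtain ⟨y, hy, rfl⟩ := hx
  have hvS : v ∈ affineSpan ℝ C := subset_affineSpan ℝ C hv
  have hyS : (y : E) ∈ affineSpan ℝ C := y.2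
  have hz : a • v + b • (y : E) ∈ affineSpan ℝ C := by
    have h := AffineSubspace.smul_vsub_vadd_mem (affineSpan ℝ C) b hyS hvS hvS
    have he : a • v + b • (y : E) = b • ((y : E) -ᵥ v) +ᵥ v := by
      simp only [vsub_eq_sub, vadd_eq_add, smul_sub]
      have : a = 1 - b := by linarith
      rw [this, sub_smul, one_smul]; abel
    rw [he]; exact h
  refine ⟨⟨a • v + b • (y : E), hz⟩, ?_, rfl⟩
  -- interior in subtype
  rw [mem_interior_iff_mem_nhds, nhds_subtype, Filter.mem_comap] at hy ⊢
  obtain ⟨V, hV, hVC⟩ := hy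
  set f : E ≃ₜ E := (Homeomorph.smulOfNeZero b hb.ne').trans
    (Homeomorph.addLeft (a • v)) with hf
  refine ⟨f '' V, f.isOpenMap.image_mem_nhds hV, ?_⟩
  rintro ⟨w, hwS⟩ hw
  obtain ⟨u, huV, hu⟩ := hw
  have hu' : a • v + b • u = w := hu
  have huS : u ∈ affineSpan ℝ C := by
    have h1 : u = b⁻¹ • (w -ᵥ (a • v + b • (y : E))) +ᵥ (y : E) := by
      rw [← hu']
      simp only [vsub_eq_sub, vadd_eq_add, smul_sub, smul_smul,
        inv_mul_cancel₀ hb.ne', one_smul, smul_add]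
      abel_nf
    rw [h1]
    exact AffineSubspace.smul_vsub_vadd_mem _ b⁻¹ hwS hz hyS
  have huC : u ∈ C := hVC (show (⟨u, huS⟩ : affineSpan ℝ C) ∈ _ from huV)
  show w ∈ C
  rw [← hu']
  exact hC hv huC ha hb.le hab

/-- The open star of a vertex `v` of a simplicial complex `K`: the union, over all
faces `s ∈ K.faces` containing `v`, of the intrinsic interiors of the convex hulls
of `s`. -/
def openStar {E : Type*} [NormedAddCommGroup E] [NormedSpace ℝ E]
    (K : SimplicialComplex ℝ E) (v : E) : Set E :=
  ⋃ s ∈ {s | s ∈ K.faces ∧ v ∈ s}, intrinsicInterior ℝ (convexHull ℝ (s : Set E))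

/-- The open star of a vertex `v` of a simplicial complex is star-convex with
respect to `v` (hence contractible): the single-vertex case underlying the fact
that the open-star cover is a good cover. -/
theorem openStar_starConvex {E : Type*} [NormedAddCommGroup E] [NormedSpace ℝ E]
    (K : SimplicialComplex ℝ E) (v : E) (hv : {v} ∈ K.faces) :
    StarConvex ℝ v (openStar K v) := by
  intro x hx a b ha hb hab
  rcases eq_or_lt_of_le hb with hb0 | hb0
  · -- b = 0: the point is v itself
    have hae : a = 1 := by linarith
    have : a • v + b • x = v := by rw [hae, ← hb0]; simp
    rw [this]
    refine Set.mem_biUnion ⟨hv, Finset.mem_singleton_self v⟩ ?_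
    rw [Finset.coe_singleton, convexHull_singleton, intrinsicInterior_singleton]
    exact Set.mem_singleton v
  · obtain ⟨s, hs, hxs⟩ := Set.mem_iUnion₂.1 hx
    refine Set.mem_biUnion hs ?_
    exact combo_mem_intrinsicInterior (convex_convexHull ℝ _)
      (subset_convexHull ℝ _ hs.2) hxs ha hb0 hab
end

section
/- Let A, B, C be groupoids and let i : B ⥤ A and j : B ⥤ C be functors. Then there exist a groupoid P, functors ιA : A ⥤ P and ιC : C ⥤ P, and a natural isomorphism η : i ⋙ ιA ≅ j ⋙ ιC, such that for every groupoid H the functor from the functor category (P ⥤ H) to the cocone category — whose objects are triples (F_A : A ⥤ H, F_C : C ⥤ H, θ : i ⋙ F_A ≅ j ⋙ F_C), and whose morphisms (F_A, F_C, θ) → (F_A', F_C', θ') are pairs of natural transformations (φ : F_A ⟶ F_A', ψ : F_C ⟶ F_C') such that whiskering φ with i followed by θ' equals θ followed by whiskering ψ with j — sending F : P ⥤ H to (ιA ⋙ F, ιC ⋙ F, the whiskering of η with F), is an equivalence of categories. -/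
open CategoryTheory

universe u

section Cocone2

variable {A B C H : Type*} [Category A] [Category B] [Category C] [Category H]

/-- A bicategorical cocone under the cospan `A ←i– B –j→ C` with vertex
functors into `H`: a pair of functors together with a natural isomorphism
`θ : i ⋙ F_A ≅ j ⋙ F_C`. -/
structure Cocone2 (i : B ⥤ A) (j : B ⥤ C) (H : Type*) [Category H] where
  FA : A ⥤ H
  FC : C ⥤ H
  θ : i ⋙ FA ≅ j ⋙ FC

/-- Morphisms of bicategorical cocones: pairs of natural transformations
compatible with the structure isomorphisms. -/
@[ext]
structure Cocone2Hom {i : B ⥤ A} {j : B ⥤ C} (X Y : Cocone2 i j H) where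
  φ : X.FA ⟶ Y.FA
  ψ : X.FC ⟶ Y.FC
  w : Functor.whiskerLeft i φ ≫ Y.θ.hom = X.θ.hom ≫ Functor.whiskerLeft j ψ

instance Cocone2.category (i : B ⥤ A) (j : B ⥤ C) :
    Category (Cocone2 i j H) where
  Hom X Y := Cocone2Hom X Y
  id X := ⟨𝟙 X.FA, 𝟙 X.FC, by simp⟩
  comp f g := ⟨f.φ ≫ g.φ, f.ψ ≫ g.ψ, by
    rw [Functor.whiskerLeft_comp, Functor.whiskerLeft_comp, Category.assoc, g.w, ← Category.assoc,
      f.w, Category.assoc]⟩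

@[simp] theorem Cocone2.id_φ {i : B ⥤ A} {j : B ⥤ C} (X : Cocone2 i j H) :
    (𝟙 X : Cocone2Hom X X).φ = 𝟙 X.FA := rfl

/-- The restriction functor: mapping out of a candidate pushout vertex `P`
(with structure functors `ιA`, `ιC` and structure isomorphism `η`) to the
category of bicategorical cocones, `F ↦ (ιA ⋙ F, ιC ⋙ F, η * F)`. -/
@[simps]
def restrictToCocone2 {P : Type*} [Category P] (i : B ⥤ A) (j : B ⥤ C)
    (ιA : A ⥤ P) (ιC : C ⥤ P) (η : i ⋙ ιA ≅ j ⋙ ιC) (H : Type*) [Category H] :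
    (P ⥤ H) ⥤ Cocone2 i j H where
  obj F :=
    { FA := ιA ⋙ F
      FC := ιC ⋙ F
      θ := (Functor.associator i ιA F).symm ≪≫ Functor.isoWhiskerRight η F ≪≫
        Functor.associator j ιC F }
  map {F F'} σ :=
    { φ := Functor.whiskerLeft ιA σ
      ψ := Functor.whiskerLeft ιC σ
      w := by
        ext b
        simp [NatTrans.naturality] }

end Cocone2


theorem square_inv {D : Type*} [Category D] {X X' Y Y' : D}
    {f : X ⟶ Y} {f' : X' ⟶ Y'} {g : Y ⟶ X} {g' : Y' ⟶ X'}
    (_hfg : f ≫ g = 𝟙 X) (hgf : g ≫ f = 𝟙 Y) (hfg' : f' ≫ g' = 𝟙 X') (_hgf' : g' ≫ f' = 𝟙 Y')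
    (a : X ⟶ X') (c : Y ⟶ Y') (hsq : a ≫ f' = f ≫ c) : g ≫ a = c ≫ g' := by
  calc g ≫ a = g ≫ a ≫ f' ≫ g' := by rw [hfg', Category.comp_id]
  _ = g ≫ (a ≫ f') ≫ g' := by simp only [Category.assoc]
  _ = ((g ≫ f) ≫ c) ≫ g' := by rw [hsq]; simp only [Category.assoc]
  _ = c ≫ g' := by rw [hgf, Category.id_comp]

section PushoutConstruction

namespace GrpdPushout

variable {A B C : Type u} [Groupoid.{u} A] [Groupoid.{u} B] [Groupoid.{u} C]

/-- The object carrier of the pushout: the disjoint union of the objects. -/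
def Pre (_i : B ⥤ A) (_j : B ⥤ C) : Type u := A ⊕ C

variable (i : B ⥤ A) (j : B ⥤ C)

/-- Objects coming from `A`. -/
def inlP (a : A) : Pre i j := Sum.inl a

/-- Objects coming from `C`. -/
def inrP (c : C) : Pre i j := Sum.inr c

/-- Generating edges: arrows of `A`, arrows of `C`, and formal isomorphisms
`s b : i b → j b` with formal inverses. -/
inductive Edge : Pre i j → Pre i j → Type u
  | inl : ∀ {a a' : A}, (a ⟶ a') → Edge (inlP i j a) (inlP i j a')
  | inr : ∀ {c c' : C}, (c ⟶ c') → Edge (inrP i j c) (inrP i j c')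
  | s : ∀ b : B, Edge (inlP i j (i.obj b)) (inrP i j (j.obj b))
  | sInv : ∀ b : B, Edge (inrP i j (j.obj b)) (inlP i j (i.obj b))

instance : Quiver (Pre i j) := ⟨Edge i j⟩

/-- Viewing an object of the graph as an object of the path category. -/
def pObj (x : Pre i j) : Paths (Pre i j) := x

/-- Viewing an edge as a morphism of the path category. -/
def toP {x y : Pre i j} (e : x ⟶ y) : pObj i j x ⟶ pObj i j y := e.toPath

/-- The relations imposed on the free category on the generating graph. -/
inductive Rel : HomRel (Paths (Pre i j))
  | idA (a : A) : Rel (toP i j (Edge.inl (𝟙 a))) (𝟙 (pObj i j (inlP i j a)))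
  | idC (c : C) : Rel (toP i j (Edge.inr (𝟙 c))) (𝟙 (pObj i j (inrP i j c)))
  | compA {a a' a'' : A} (f : a ⟶ a') (g : a' ⟶ a'') :
      Rel (toP i j (Edge.inl (f ≫ g))) (toP i j (Edge.inl f) ≫ toP i j (Edge.inl g))
  | compC {c c' c'' : C} (f : c ⟶ c') (g : c' ⟶ c'') :
      Rel (toP i j (Edge.inr (f ≫ g))) (toP i j (Edge.inr f) ≫ toP i j (Edge.inr g))
  | sSInv (b : B) :
      Rel (toP i j (Edge.s b) ≫ toP i j (Edge.sInv b)) (𝟙 (pObj i j (inlP i j (i.obj b))))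
  | sInvS (b : B) :
      Rel (toP i j (Edge.sInv b) ≫ toP i j (Edge.s b)) (𝟙 (pObj i j (inrP i j (j.obj b))))
  | nat {b b' : B} (u : b ⟶ b') :
      Rel (toP i j (Edge.inl (i.map u)) ≫ toP i j (Edge.s b'))
        (toP i j (Edge.s b) ≫ toP i j (Edge.inr (j.map u)))

/-- The pushout category: free category on the graph, modulo the relations. -/
def P := CategoryTheory.Quotient (Rel i j)

instance : Category (P i j) := inferInstanceAs (Category (CategoryTheory.Quotient (Rel i j)))

/-- The projection functor from the path category. -/
def π : Paths (Pre i j) ⥤ P i j := Quotient.functor (Rel i j)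

/-- The inclusion of `A` into the pushout. -/
def ιA : A ⥤ P i j where
  obj a := (π i j).obj (pObj i j (inlP i j a))
  map f := (π i j).map (toP i j (Edge.inl f))
  map_id a := by
    rw [show (π i j).map (toP i j (Edge.inl (𝟙 a)))
        = (π i j).map (𝟙 (pObj i j (inlP i j a))) from
      CategoryTheory.Quotient.sound _ (Rel.idA a)]
    exact (π i j).map_id _
  map_comp f g := by
    rw [show (π i j).map (toP i j (Edge.inl (f ≫ g)))
        = (π i j).map (toP i j (Edge.inl f) ≫ toP i j (Edge.inl g)) from
      CategoryTheory.Quotient.sound _ (Rel.compA f g)]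
    exact (π i j).map_comp _ _

/-- The inclusion of `C` into the pushout. -/
def ιC : C ⥤ P i j where
  obj c := (π i j).obj (pObj i j (inrP i j c))
  map f := (π i j).map (toP i j (Edge.inr f))
  map_id c := by
    rw [show (π i j).map (toP i j (Edge.inr (𝟙 c)))
        = (π i j).map (𝟙 (pObj i j (inrP i j c))) from
      CategoryTheory.Quotient.sound _ (Rel.idC c)]
    exact (π i j).map_id _
  map_comp f g := by
    rw [show (π i j).map (toP i j (Edge.inr (f ≫ g)))
        = (π i j).map (toP i j (Edge.inr f) ≫ toP i j (Edge.inr g)) from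
      CategoryTheory.Quotient.sound _ (Rel.compC f g)]
    exact (π i j).map_comp _ _

theorem s_comp_sInv (b : B) :
    (π i j).map (toP i j (Edge.s b)) ≫ (π i j).map (toP i j (Edge.sInv b)) = 𝟙 _ := by
  rw [← (π i j).map_comp, show (π i j).map (toP i j (Edge.s b) ≫ toP i j (Edge.sInv b))
      = (π i j).map (𝟙 (pObj i j (inlP i j (i.obj b)))) from
    CategoryTheory.Quotient.sound _ (Rel.sSInv b)]
  exact (π i j).map_id _

theorem sInv_comp_s (b : B) :
    (π i j).map (toP i j (Edge.sInv b)) ≫ (π i j).map (toP i j (Edge.s b)) = 𝟙 _ := by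
  rw [← (π i j).map_comp, show (π i j).map (toP i j (Edge.sInv b) ≫ toP i j (Edge.s b))
      = (π i j).map (𝟙 (pObj i j (inrP i j (j.obj b)))) from
    CategoryTheory.Quotient.sound _ (Rel.sInvS b)]
  exact (π i j).map_id _

/-- The structure isomorphism `η : i ⋙ ιA ≅ j ⋙ ιC`. -/
def η : i ⋙ ιA i j ≅ j ⋙ ιC i j :=
  NatIso.ofComponents
    (fun b => ⟨(π i j).map (toP i j (Edge.s b)), (π i j).map (toP i j (Edge.sInv b)),
        s_comp_sInv i j b, sInv_comp_s i j b⟩)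
    (fun {b b'} u => by
      show (π i j).map _ ≫ (π i j).map _ = (π i j).map _ ≫ (π i j).map _
      rw [← Functor.map_comp, ← Functor.map_comp]
      exact CategoryTheory.Quotient.sound _ (Rel.nat u))

theorem isIso_edge {x y : Pre i j} (e : x ⟶ y) : IsIso ((π i j).map (toP i j e)) := by
  change Edge i j x y at e
  cases e with
  | inl f =>
    refine ⟨(ιA i j).map (Groupoid.inv f), ?_, ?_⟩
    · show (ιA i j).map f ≫ (ιA i j).map (Groupoid.inv f) = 𝟙 ((ιA i j).obj _)
      rw [← (ιA i j).map_comp, Groupoid.comp_inv]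
      exact (ιA i j).map_id _
    · show (ιA i j).map (Groupoid.inv f) ≫ (ιA i j).map f = 𝟙 ((ιA i j).obj _)
      rw [← (ιA i j).map_comp, Groupoid.inv_comp]
      exact (ιA i j).map_id _
  | inr f =>
    refine ⟨(ιC i j).map (Groupoid.inv f), ?_, ?_⟩
    · show (ιC i j).map f ≫ (ιC i j).map (Groupoid.inv f) = 𝟙 ((ιC i j).obj _)
      rw [← (ιC i j).map_comp, Groupoid.comp_inv]
      exact (ιC i j).map_id _
    · show (ιC i j).map (Groupoid.inv f) ≫ (ιC i j).map f = 𝟙 ((ιC i j).obj _)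
      rw [← (ιC i j).map_comp, Groupoid.inv_comp]
      exact (ιC i j).map_id _
  | s b => exact ⟨(π i j).map (toP i j (Edge.sInv b)),
      s_comp_sInv i j b, sInv_comp_s i j b⟩
  | sInv b => exact ⟨(π i j).map (toP i j (Edge.s b)),
      sInv_comp_s i j b, s_comp_sInv i j b⟩

theorem isIso_all {x y : P i j} (f : x ⟶ y) : IsIso f := by
  induction f using Quotient.induction with
  | h f =>
    change Quiver.Path _ _ at f
    induction f with
    | nil => exact ⟨(π i j).map (Quiver.Path.nil), rfl, rfl⟩
    | cons p e ih =>
      change IsIso ((Quotient.functor (Rel i j)).map p ≫ (π i j).map (toP i j e))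
      have := isIso_edge i j e
      exact @IsIso.comp_isIso _ _ _ _ _ _ _ ih this

noncomputable instance : Groupoid (P i j) := Groupoid.ofIsIso (fun f => isIso_all i j f)

variable {H : Type u} [Groupoid.{u} H]

/-- The prefunctor associated to a cocone. -/
def coconePrefunctor (X : Cocone2 i j H) : Pre i j ⥤q H where
  obj x := match x with
    | Sum.inl a => X.FA.obj a
    | Sum.inr c => X.FC.obj c
  map e := match e with
    | Edge.inl f => X.FA.map f
    | Edge.inr f => X.FC.map f
    | Edge.s b => X.θ.hom.app b
    | Edge.sInv b => X.θ.inv.app b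

theorem lift_toP (X : Cocone2 i j H) {x y : Pre i j} (e : x ⟶ y) :
    (Paths.lift (coconePrefunctor i j X)).map (toP i j e) = (coconePrefunctor i j X).map e :=
  Paths.lift_toPath _ _

theorem cocone_rel (X : Cocone2 i j H) : ∀ (x y : Paths (Pre i j)) (f g : x ⟶ y),
    Rel i j f g → (Paths.lift (coconePrefunctor i j X)).map f
      = (Paths.lift (coconePrefunctor i j X)).map g := by
  intro x y f g h
  induction h with
  | idA a => rw [lift_toP, CategoryTheory.Functor.map_id]; exact X.FA.map_id a
  | idC c => rw [lift_toP, CategoryTheory.Functor.map_id]; exact X.FC.map_id c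
  | compA f g => rw [Functor.map_comp, lift_toP, lift_toP, lift_toP]; exact X.FA.map_comp f g
  | compC f g => rw [Functor.map_comp, lift_toP, lift_toP, lift_toP]; exact X.FC.map_comp f g
  | sSInv b => rw [Functor.map_comp, lift_toP, lift_toP, CategoryTheory.Functor.map_id]; exact X.θ.hom_inv_id_app b
  | sInvS b => rw [Functor.map_comp, lift_toP, lift_toP, CategoryTheory.Functor.map_id]; exact X.θ.inv_hom_id_app b
  | nat u =>
    rw [Functor.map_comp, Functor.map_comp, lift_toP, lift_toP, lift_toP, lift_toP]
    exact X.θ.hom.naturality u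

/-- The functor out of the pushout induced by a cocone. -/
def coconeLift (X : Cocone2 i j H) : P i j ⥤ H :=
  CategoryTheory.Quotient.lift (Rel i j) (Paths.lift (coconePrefunctor i j X)) (cocone_rel i j X)

@[simp] theorem coconeLift_mapA (X : Cocone2 i j H) {a a' : A} (f : a ⟶ a') :
    (coconeLift i j X).map ((ιA i j).map f) = X.FA.map f := by
  show (Paths.lift (coconePrefunctor i j X)).map (toP i j (Edge.inl f)) = _
  rw [lift_toP]; rfl

@[simp] theorem coconeLift_mapC (X : Cocone2 i j H) {c c' : C} (f : c ⟶ c') :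
    (coconeLift i j X).map ((ιC i j).map f) = X.FC.map f := by
  show (Paths.lift (coconePrefunctor i j X)).map (toP i j (Edge.inr f)) = _
  rw [lift_toP]; rfl

@[simp] theorem coconeLift_mapS (X : Cocone2 i j H) (b : B) :
    (coconeLift i j X).map ((η i j).hom.app b) = X.θ.hom.app b := by
  show (Paths.lift (coconePrefunctor i j X)).map (toP i j (Edge.s b)) = _
  rw [lift_toP]; rfl

section NatTransLift

variable {F G : P i j ⥤ H}

/-- Components of a lifted natural transformation. -/
def appFun (φ : ιA i j ⋙ F ⟶ ιA i j ⋙ G) (ψ : ιC i j ⋙ F ⟶ ιC i j ⋙ G) (x : Pre i j) :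
    F.obj ((π i j).obj (pObj i j x)) ⟶ G.obj ((π i j).obj (pObj i j x)) :=
  match x with
  | Sum.inl a => φ.app a
  | Sum.inr c => ψ.app c

theorem edge_nat (φ : ιA i j ⋙ F ⟶ ιA i j ⋙ G) (ψ : ιC i j ⋙ F ⟶ ιC i j ⋙ G)
    (w : ∀ b : B, φ.app (i.obj b) ≫ G.map ((η i j).hom.app b)
      = F.map ((η i j).hom.app b) ≫ ψ.app (j.obj b))
    {x y : Pre i j} (e : x ⟶ y) :
    F.map ((π i j).map (toP i j e)) ≫ appFun i j φ ψ y
      = appFun i j φ ψ x ≫ G.map ((π i j).map (toP i j e)) := by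
  change Edge i j x y at e
  cases e with
  | inl f => exact φ.naturality f
  | inr f => exact ψ.naturality f
  | s b => exact (w b).symm
  | sInv b =>
    have h1 : F.map ((π i j).map (toP i j (Edge.s b)))
        ≫ F.map ((π i j).map (toP i j (Edge.sInv b))) = 𝟙 _ := by
      rw [← F.map_comp, s_comp_sInv i j b, F.map_id]
    have h1' : F.map ((π i j).map (toP i j (Edge.sInv b)))
        ≫ F.map ((π i j).map (toP i j (Edge.s b))) = 𝟙 _ := by
      rw [← F.map_comp, sInv_comp_s i j b, F.map_id]
    have h2 : G.map ((π i j).map (toP i j (Edge.s b)))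
        ≫ G.map ((π i j).map (toP i j (Edge.sInv b))) = 𝟙 _ := by
      rw [← G.map_comp, s_comp_sInv i j b, G.map_id]
    have h2' : G.map ((π i j).map (toP i j (Edge.sInv b)))
        ≫ G.map ((π i j).map (toP i j (Edge.s b))) = 𝟙 _ := by
      rw [← G.map_comp, sInv_comp_s i j b, G.map_id]
    exact square_inv h1 h1' h2 h2' (φ.app (i.obj b)) (ψ.app (j.obj b)) (w b)

/-- Lifting a pair of compatible natural transformations to the pushout. -/
def liftNatTrans (φ : ιA i j ⋙ F ⟶ ιA i j ⋙ G) (ψ : ιC i j ⋙ F ⟶ ιC i j ⋙ G)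
    (w : ∀ b : B, φ.app (i.obj b) ≫ G.map ((η i j).hom.app b)
      = F.map ((η i j).hom.app b) ≫ ψ.app (j.obj b)) : F ⟶ G where
  app x := appFun i j φ ψ x.as
  naturality := by
    intro x y f
    induction f using Quotient.induction with
    | h p =>
      rename_i x' y'
      show F.map ((π i j).map p) ≫ appFun i j φ ψ y'
        = appFun i j φ ψ x' ≫ G.map ((π i j).map p)
      change Quiver.Path _ _ at p
      induction p with
      | nil =>
        show F.map (𝟙 _) ≫ _ = _ ≫ G.map (𝟙 _)
        rw [F.map_id, G.map_id]
        exact (Category.id_comp _).trans (Category.comp_id _).symm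
      | cons q e ih =>
        change F.map ((π i j).map q ≫ (π i j).map (toP i j e)) ≫ _
          = _ ≫ G.map ((π i j).map q ≫ (π i j).map (toP i j e))
        rw [F.map_comp, G.map_comp, Category.assoc]
        erw [edge_nat i j φ ψ w e]
        exact (Category.assoc _ _ _).symm.trans ((congrArg (· ≫ _) ih).trans (Category.assoc _ _ _))

end NatTransLift

/-- The `A`-component of the restriction of the lifted functor agrees with the cocone. -/
def coconeLiftIsoA (X : Cocone2 i j H) : ιA i j ⋙ coconeLift i j X ≅ X.FA :=
  NatIso.ofComponents (fun a => Iso.refl _) (by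
    intro a a' f
    show (coconeLift i j X).map ((ιA i j).map f) ≫ 𝟙 _ = 𝟙 _ ≫ X.FA.map f
    rw [coconeLift_mapA]; exact (Category.comp_id _).trans (Category.id_comp _).symm)

/-- The `C`-component of the restriction of the lifted functor agrees with the cocone. -/
def coconeLiftIsoC (X : Cocone2 i j H) : ιC i j ⋙ coconeLift i j X ≅ X.FC :=
  NatIso.ofComponents (fun c => Iso.refl _) (by
    intro c c' f
    show (coconeLift i j X).map ((ιC i j).map f) ≫ 𝟙 _ = 𝟙 _ ≫ X.FC.map f
    rw [coconeLift_mapC]; exact (Category.comp_id _).trans (Category.id_comp _).symm)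

theorem coconeLift_w (X : Cocone2 i j H) :
    Functor.whiskerLeft i (coconeLiftIsoA i j X).hom
        ≫ X.θ.hom
      = ((restrictToCocone2 i j (ιA i j) (ιC i j) (η i j) H).obj (coconeLift i j X)).θ.hom
        ≫ Functor.whiskerLeft j (coconeLiftIsoC i j X).hom := by
  ext b
  simp [coconeLiftIsoA, coconeLiftIsoC, NatIso.ofComponents, restrictToCocone2]
  erw [Category.id_comp, Category.comp_id, Category.comp_id]

theorem coconeLift_w' (X : Cocone2 i j H) :
    Functor.whiskerLeft i (coconeLiftIsoA i j X).inv
        ≫ ((restrictToCocone2 i j (ιA i j) (ιC i j) (η i j) H).obj (coconeLift i j X)).θ.hom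
      = X.θ.hom ≫ Functor.whiskerLeft j (coconeLiftIsoC i j X).inv := by
  ext b
  simp [coconeLiftIsoA, coconeLiftIsoC, NatIso.ofComponents, restrictToCocone2]
  erw [Category.id_comp]
  rfl

/-- The restriction of the lifted functor is isomorphic to the original cocone. -/
def coconeLiftIso (X : Cocone2 i j H) :
    (restrictToCocone2 i j (ιA i j) (ιC i j) (η i j) H).obj (coconeLift i j X) ≅ X where
  hom := Cocone2Hom.mk (coconeLiftIsoA i j X).hom (coconeLiftIsoC i j X).hom
    (coconeLift_w i j X)
  inv := Cocone2Hom.mk (coconeLiftIsoA i j X).inv (coconeLiftIsoC i j X).inv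
    (coconeLift_w' i j X)
  hom_inv_id := Cocone2Hom.ext (coconeLiftIsoA i j X).hom_inv_id (coconeLiftIsoC i j X).hom_inv_id
  inv_hom_id := Cocone2Hom.ext (coconeLiftIsoA i j X).inv_hom_id (coconeLiftIsoC i j X).inv_hom_id


end GrpdPushout

end PushoutConstruction

/-- Lemma 7.3 (strict model for the bicategorical 2-pushout of groupoids):
for any cospan of groupoids `A ←i– B –j→ C` there exist a groupoid `P`,
functors `ιA : A ⥤ P`, `ιC : C ⥤ P` and a natural isomorphism
`η : i ⋙ ιA ≅ j ⋙ ιC` such that, for every groupoid `H`, the restriction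
functor `(P ⥤ H) ⥤ Cocone2 i j H`, `F ↦ (ιA ⋙ F, ιC ⋙ F, η whiskered with F)`,
is an equivalence of categories. -/
theorem groupoid_two_pushout_exists
    {A B C : Type u} [Groupoid.{u} A] [Groupoid.{u} B] [Groupoid.{u} C]
    (i : B ⥤ A) (j : B ⥤ C) :
    ∃ (P : Grpd.{u, u}) (ιA : A ⥤ P) (ιC : C ⥤ P) (η : i ⋙ ιA ≅ j ⋙ ιC),
      ∀ H : Grpd.{u, u}, (restrictToCocone2 i j ιA ιC η H).IsEquivalence := by
  refine ⟨Grpd.of (GrpdPushout.P i j), GrpdPushout.ιA i j, GrpdPushout.ιC i j,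
    GrpdPushout.η i j, fun H => ?_⟩
  refine { faithful := ?_, full := ?_, essSurj := ?_ }
  · refine { map_injective := ?_ }
    intro F G τ τ' h
    have hφ := congrArg Cocone2Hom.φ h
    have hψ := congrArg Cocone2Hom.ψ h
    ext x
    obtain ⟨x⟩ := x
    rcases x with a | c
    · exact NatTrans.congr_app hφ a
    · exact NatTrans.congr_app hψ c
  · refine { map_surjective := ?_ }
    intro F G t
    have w : ∀ b : B, t.φ.app (i.obj b) ≫ G.map ((GrpdPushout.η i j).hom.app b)
        = F.map ((GrpdPushout.η i j).hom.app b) ≫ t.ψ.app (j.obj b) := by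
      intro b
      have h := NatTrans.congr_app t.w b
      simp [restrictToCocone2] at h
      refine Eq.trans ?_ (h.trans ?_)
      · erw [Category.id_comp, Category.comp_id]; rfl
      · erw [Category.id_comp, Category.id_comp]; rfl
    refine ⟨GrpdPushout.liftNatTrans i j t.φ t.ψ w, ?_⟩
    refine Cocone2Hom.ext ?_ ?_
    · ext a; rfl
    · ext c; rfl
  · refine { mem_essImage := ?_ }
    intro X
    exact ⟨GrpdPushout.coconeLift i j X, ⟨GrpdPushout.coconeLiftIso i j X⟩⟩
end
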